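/- Let K be a field, P ∈ K[x]^{m×n}, and s ∈ ℤ^n such that P is in s-reduced form. Let t = rdeg_s(P) ∈ ℤ^m, and let Q ∈ K[x]^{k×m} be in t-reduced form. Then the product Q·P is in s-reduced form. -/

import Mathlib

open Polynomial Matrix

noncomputable section

variable {K : Type*} [Field K]

/-- Degree of a univariate polynomial, viewed in `ℤ ∪ {⊥}`. -/
def pdegZ (p : K[X]) : WithBot ℤ := p.degree.map (Nat.cast : ℕ → ℤ)

/-- Shifted degree (`s`-degree) of a row vector. -/
def sdeg {n : ℕ} (s : Fin n → ℤ) (p : Fin n → K[X]) : WithBot ℤ :=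
  Finset.univ.sup fun j => pdegZ (p j) + (s j : WithBot ℤ)

/-- `s`-leading matrix of `P`. -/
def leadMat {m n : ℕ} (s : Fin n → ℤ) (P : Matrix (Fin m) (Fin n) K[X]) :
    Matrix (Fin m) (Fin n) K :=
  Matrix.of fun i j =>
    if pdegZ (P i j) + (s j : WithBot ℤ) = sdeg s (P i) then (P i j).leadingCoeff else 0

/-- `P` is `s`-reduced: its `s`-leading matrix has full row rank. -/
def IsShiftReduced {m n : ℕ} (s : Fin n → ℤ) (P : Matrix (Fin m) (Fin n) K[X]) : Prop :=
  (leadMat s P).rank = m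

/-- `j` is the `s`-pivot index of the row `p`: the largest index where the `s`-degree is attained. -/
def IsPivotIndex {n : ℕ} (s : Fin n → ℤ) (p : Fin n → K[X]) (j : Fin n) : Prop :=
  pdegZ (p j) + (s j : WithBot ℤ) = sdeg s p ∧
  ∀ j', j < j' → pdegZ (p j') + (s j' : WithBot ℤ) ≠ sdeg s p

/-- `P` is in `s`-weak Popov form: no zero row and strictly increasing `s`-pivot indices. -/
def IsWeakPopov {m n : ℕ} (s : Fin n → ℤ) (P : Matrix (Fin m) (Fin n) K[X]) : Prop :=
  (∀ i, P i ≠ 0) ∧ ∃ piv : Fin m → Fin n, StrictMono piv ∧ ∀ i, IsPivotIndex s (P i) (piv i)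

/-- The rows of `Kb` form a basis of the left kernel of `F`. -/
def IsKernelBasis {ℓ m : ℕ} {β : Type*} [Fintype β]
    (Kb : Matrix (Fin ℓ) (Fin m) K[X]) (F : Matrix (Fin m) β K[X]) : Prop :=
  (∀ i, Kb i ᵥ* F = 0) ∧
  LinearIndependent K[X] (fun i : Fin ℓ => Kb i) ∧
  ∀ p : Fin m → K[X], p ᵥ* F = 0 → ∃ u : Fin ℓ → K[X], p = u ᵥ* Kb

/-- Membership in the relation module `Rel_M(F)`. -/
def InRelModule {m n : ℕ} (M : Matrix (Fin n) (Fin n) K[X])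
    (F : Matrix (Fin m) (Fin n) K[X]) (p : Fin m → K[X]) : Prop :=
  ∃ q : Fin n → K[X], p ᵥ* F = q ᵥ* M

/-- The rows of `A` form a basis of the relation module `Rel_M(F)`. -/
def IsRelationBasis {ℓ m n : ℕ} (M : Matrix (Fin n) (Fin n) K[X])
    (A : Matrix (Fin ℓ) (Fin m) K[X]) (F : Matrix (Fin m) (Fin n) K[X]) : Prop :=
  (∀ i, InRelModule M F (A i)) ∧
  LinearIndependent K[X] (fun i : Fin ℓ => A i) ∧
  ∀ p : Fin m → K[X], InRelModule M F p → ∃ u : Fin ℓ → K[X], p = u ᵥ* A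

/-- Rank of a polynomial matrix: its rank over the fraction field `K(x)`. -/
def polyRank {α β : Type*} [Fintype β] (F : Matrix α β K[X]) : ℕ :=
  (F.map (algebraMap K[X] (RatFunc K))).rank

/-- Lexicographic comparison of tuples. -/
def lexLE {r n : ℕ} (a b : Fin r → Fin n) : Prop :=
  ∀ i, (∀ k, k < i → a k = b k) → a i ≤ b i

/-- `j` lists the column rank profile of `F`: the lexicographically smallest strictly
increasing tuple of `rank F` column indices selecting columns of full rank. -/
def IsColRankProfile {α : Type*} {n r : ℕ} (F : Matrix α (Fin n) K[X])
    (j : Fin r → Fin n) : Prop :=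
  StrictMono j ∧ polyRank F = r ∧ polyRank (F.submatrix id j) = r ∧
  ∀ j' : Fin r → Fin n, StrictMono j' → polyRank (F.submatrix id j') = r → lexLE j j'


/-! Let `d i` be the `t`-degree of row `i` of `Q`. Since `deg Q i l ≤ d i - t l` and
`deg P l j ≤ t l - s j`, every entry `(Q * P) i j` has degree at most `d i - s j`, and its
coefficient of degree `d i - s j` is the entry `(i, j)` of `lm_t(Q) * lm_s(P)`. This product of
full-row-rank matrices has full row rank, so none of its rows vanishes: the `s`-degree of row `i`
of `Q * P` is exactly `d i`, and `lm_s(Q * P) = lm_t(Q) * lm_s(P)`. -/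

def coeffZ (p : K[X]) (a : ℤ) : K := if 0 ≤ a then p.coeff a.toNat else 0

namespace WithBot

lemma add_coe_le_coe_iff_le_sub {x : WithBot ℤ} {c e : ℤ} :
    x + (c : WithBot ℤ) ≤ (e : WithBot ℤ) ↔ x ≤ ((e - c : ℤ) : WithBot ℤ) := by
  cases x with
  | bot => simp
  | coe x => rw [← WithBot.coe_add, coe_le_coe, coe_le_coe]; omega

lemma add_coe_eq_coe_iff_eq_sub {x : WithBot ℤ} {c e : ℤ} :
    x + (c : WithBot ℤ) = (e : WithBot ℤ) ↔ x = ((e - c : ℤ) : WithBot ℤ) := by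
  cases x with
  | bot => simp
  | coe x => rw [← WithBot.coe_add, coe_eq_coe, coe_eq_coe]; omega

end WithBot

open WithBot

@[simp] lemma pdegZ_zero : pdegZ (0 : K[X]) = ⊥ := by simp [pdegZ]

lemma pdegZ_eq_natDegree {p : K[X]} (hp : p ≠ 0) : pdegZ p = (p.natDegree : ℤ) := by
  rw [pdegZ, degree_eq_natDegree hp]
  rfl

lemma pdegZ_mul (p q : K[X]) : pdegZ (p * q) = pdegZ p + pdegZ q := by
  rw [pdegZ, pdegZ, pdegZ, degree_mul]
  exact WithBot.map_add (Nat.castAddMonoidHom ℤ) _ _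

lemma pdegZ_add_le (p q : K[X]) : pdegZ (p + q) ≤ max (pdegZ p) (pdegZ q) := by
  have hmono : Monotone (WithBot.map (Nat.cast : ℕ → ℤ)) :=
    fun _ _ h => (WithBot.map_le_iff _ Nat.cast_le).2 h
  exact (hmono (degree_add_le p q)).trans_eq hmono.map_max

lemma pdegZ_sum_le {ι : Type*} (s : Finset ι) (f : ι → K[X]) {a : WithBot ℤ}
    (h : ∀ i ∈ s, pdegZ (f i) ≤ a) : pdegZ (∑ i ∈ s, f i) ≤ a :=
  Finset.sum_induction f (fun p => pdegZ p ≤ a)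
    (fun p q hp hq => (pdegZ_add_le p q).trans (max_le hp hq)) (by simp) h

lemma coeffZ_sum {ι : Type*} (s : Finset ι) (f : ι → K[X]) (a : ℤ) :
    coeffZ (∑ i ∈ s, f i) a = ∑ i ∈ s, coeffZ (f i) a := by
  unfold coeffZ
  split_ifs <;> simp [finsetSum_coeff]

lemma coeffZ_of_pdegZ_le {p : K[X]} {a : ℤ} (h : pdegZ p ≤ a) :
    coeffZ p a = if pdegZ p = a then p.leadingCoeff else 0 := by
  rcases eq_or_ne p 0 with rfl | hp
  · simp [coeffZ]
  rw [pdegZ_eq_natDegree hp, coe_le_coe] at h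
  simp only [pdegZ_eq_natDegree hp, coe_eq_coe, coeffZ, if_pos (show 0 ≤ a by omega)]
  split_ifs with ha
  · rw [← ha, Int.toNat_natCast, coeff_natDegree]
  · exact coeff_eq_zero_of_natDegree_lt (by omega)

lemma le_pdegZ_of_coeffZ_ne_zero {p : K[X]} {a : ℤ} (h : coeffZ p a ≠ 0) :
    (a : WithBot ℤ) ≤ pdegZ p := by
  by_contra! hlt
  rw [coeffZ_of_pdegZ_le hlt.le, if_neg hlt.ne] at h
  exact h rfl

lemma coeffZ_mul_of_pdegZ_le {p q : K[X]} {a b : ℤ} (hp : pdegZ p ≤ a) (hq : pdegZ q ≤ b) :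
    coeffZ (p * q) (a + b) = coeffZ p a * coeffZ q b := by
  rcases eq_or_ne p 0 with rfl | hp0
  · simp [coeffZ]
  rcases eq_or_ne q 0 with rfl | hq0
  · simp [coeffZ]
  rw [pdegZ_eq_natDegree hp0, coe_le_coe] at hp
  rw [pdegZ_eq_natDegree hq0, coe_le_coe] at hq
  have ha : 0 ≤ a := by omega
  have hb : 0 ≤ b := by omega
  rw [coeffZ, coeffZ, coeffZ, if_pos ha, if_pos hb, if_pos (add_nonneg ha hb), Int.toNat_add ha hb]
  exact coeff_mul_add_eq_of_natDegree_le (by omega) (by omega)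

section ShiftedDegree

variable {m n : ℕ} {s : Fin n → ℤ}

lemma le_sdeg (p : Fin n → K[X]) (j : Fin n) : pdegZ (p j) + (s j : WithBot ℤ) ≤ sdeg s p :=
  Finset.le_sup (f := fun j => pdegZ (p j) + (s j : WithBot ℤ)) (Finset.mem_univ j)

lemma sdeg_le_coe_iff {p : Fin n → K[X]} {d : ℤ} :
    sdeg s p ≤ d ↔ ∀ j, pdegZ (p j) ≤ ((d - s j : ℤ) : WithBot ℤ) := by
  simp [sdeg, Finset.sup_le_iff, add_coe_le_coe_iff_le_sub]

lemma sdeg_eq_of_coeffZ_ne_zero {p : Fin n → K[X]} {d : ℤ} (hle : sdeg s p ≤ d) {j : Fin n}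
    (hj : coeffZ (p j) (d - s j) ≠ 0) : sdeg s p = d := by
  have hj_deg : pdegZ (p j) = ((d - s j : ℤ) : WithBot ℤ) :=
    le_antisymm (sdeg_le_coe_iff.1 hle j) (le_pdegZ_of_coeffZ_ne_zero hj)
  exact le_antisymm hle ((add_coe_eq_coe_iff_eq_sub.2 hj_deg).symm.trans_le (le_sdeg p j))

lemma leadMat_apply_eq_coeffZ {P : Matrix (Fin m) (Fin n) K[X]} {i : Fin m} {d : ℤ}
    (hd : sdeg s (P i) = d) (j : Fin n) : leadMat s P i j = coeffZ (P i j) (d - s j) := by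
  rw [coeffZ_of_pdegZ_le (sdeg_le_coe_iff.1 hd.le j), leadMat, of_apply, hd]
  simp only [add_coe_eq_coe_iff_eq_sub]

lemma exists_sdeg_eq_coe_of_leadMat_ne_zero {P : Matrix (Fin m) (Fin n) K[X]} {i : Fin m}
    (h : leadMat s P i ≠ 0) : ∃ d : ℤ, sdeg s (P i) = d := by
  obtain ⟨j, hj⟩ := Function.ne_iff.1 h
  simp only [leadMat, of_apply] at hj
  split_ifs at hj with hattained
  · refine ⟨(P i j).natDegree + s j, ?_⟩
    rw [← hattained, pdegZ_eq_natDegree (leadingCoeff_ne_zero.1 hj), WithBot.coe_add]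
  · exact absurd rfl hj

end ShiftedDegree

section Product

variable {k m n : ℕ} {s : Fin n → ℤ} {t : Fin m → ℤ}
  {P : Matrix (Fin m) (Fin n) K[X]} {Q : Matrix (Fin k) (Fin m) K[X]}

lemma sdeg_mul_row_le (hP : ∀ l, sdeg s (P l) ≤ t l) {i : Fin k} {d : ℤ}
    (hQ : sdeg t (Q i) ≤ d) : sdeg s ((Q * P) i) ≤ d :=
  sdeg_le_coe_iff.2 fun j => by
    rw [mul_apply]
    refine pdegZ_sum_le _ _ fun l _ => ?_
    rw [pdegZ_mul, ← sub_add_sub_cancel d (t l) (s j), WithBot.coe_add]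
    exact add_le_add (sdeg_le_coe_iff.1 hQ l) (sdeg_le_coe_iff.1 (hP l) j)

lemma coeffZ_mul_apply (hP : ∀ l, sdeg s (P l) ≤ t l) {i : Fin k} {d : ℤ}
    (hQ : sdeg t (Q i) ≤ d) (j : Fin n) :
    coeffZ ((Q * P) i j) (d - s j) =
      ∑ l, coeffZ (Q i l) (d - t l) * coeffZ (P l j) (t l - s j) := by
  rw [mul_apply, coeffZ_sum]
  refine Finset.sum_congr rfl fun l _ => ?_
  rw [← coeffZ_mul_of_pdegZ_le (sdeg_le_coe_iff.1 hQ l) (sdeg_le_coe_iff.1 (hP l) j),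
    sub_add_sub_cancel]

theorem leadMat_mul (hP : ∀ l, sdeg s (P l) = t l)
    (hrow : ∀ i, (leadMat t Q * leadMat s P) i ≠ 0) :
    leadMat s (Q * P) = leadMat t Q * leadMat s P := by
  funext i
  obtain ⟨d, hd⟩ : ∃ d : ℤ, sdeg t (Q i) = d := exists_sdeg_eq_coe_of_leadMat_ne_zero fun h =>
    hrow i (by rw [mul_apply_eq_vecMul, h, zero_vecMul])
  have hcoeff : ∀ j, coeffZ ((Q * P) i j) (d - s j) = (leadMat t Q * leadMat s P) i j := by
    intro j
    rw [coeffZ_mul_apply (fun l => (hP l).le) hd.le, mul_apply]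
    refine Finset.sum_congr rfl fun l _ => ?_
    rw [leadMat_apply_eq_coeffZ hd, leadMat_apply_eq_coeffZ (hP l)]
  obtain ⟨j₀, hj₀⟩ := Function.ne_iff.1 (hrow i)
  have hsdeg : sdeg s ((Q * P) i) = d :=
    sdeg_eq_of_coeffZ_ne_zero (sdeg_mul_row_le (fun l => (hP l).le) hd.le)
      (j := j₀) (by rw [hcoeff]; exact hj₀)
  funext j
  rw [leadMat_apply_eq_coeffZ hsdeg, hcoeff]

end Product

lemma rank_eq_card_iff_linearIndependent_row {ι κ : Type*} [Fintype ι] [Fintype κ]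
    {A : Matrix ι κ K} : A.rank = Fintype.card ι ↔ LinearIndependent K A.row := by
  rw [rank_eq_finrank_span_row, linearIndependent_iff_card_eq_finrank_span, Set.finrank, eq_comm]

lemma isShiftReduced_iff {m n : ℕ} {s : Fin n → ℤ} {P : Matrix (Fin m) (Fin n) K[X]} :
    IsShiftReduced s P ↔ LinearIndependent K (leadMat s P).row := by
  rw [IsShiftReduced, ← rank_eq_card_iff_linearIndependent_row, Fintype.card_fin]

lemma linearIndependent_row_mul {ι κ μ : Type*} [Fintype κ] {A : Matrix ι κ K}
    {B : Matrix κ μ K} (hA : LinearIndependent K A.row) (hB : LinearIndependent K B.row) :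
    LinearIndependent K (A * B).row :=
  hA.map' B.vecMulLinear (LinearMap.ker_eq_bot.2 (vecMul_injective_iff.2 hB))

/-- Products of shifted reduced matrices are shifted reduced. -/
theorem stmt2 {K : Type*} [Field K] {m n k : ℕ}
    (P : Matrix (Fin m) (Fin n) K[X]) (s : Fin n → ℤ) (hP : IsShiftReduced s P)
    (t : Fin m → ℤ) (ht : ∀ i, (t i : WithBot ℤ) = sdeg s (P i))
    (Q : Matrix (Fin k) (Fin m) K[X]) (hQ : IsShiftReduced t Q) :
    IsShiftReduced s (Q * P) := by
  rw [isShiftReduced_iff] at hP hQ ⊢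
  have hprod := linearIndependent_row_mul hQ hP
  rwa [leadMat_mul (fun l => (ht l).symm) hprod.ne_zero]

end
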